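/- arXiv:1812.00010 — 2 statements merged into one kernel-verified Lean document; each statement's English description precedes it below -/
import Mathlib

section
/- Consider a quadratic differential φ = e^{z^{-k}} z^{-l} g(z) dz^{⊗2} on the disk D = {|z| < 2}, where k ≥ 1, l ∈ ℤ, and g is a nonvanishing holomorphic function on D. Then for the loop γ(t) = e^{it} around 0, the winding number wind_φ(γ) equals 2 - l. -/
open Complex Metric intervalIntegral

/-- For a quadratic differential `φ = e^{z^{-k}} z^{-l} g(z) dz^{⊗2}` on
the disk `D = {|z| < 2}` with `k ≥ 1`, `l ∈ ℤ` and `g` holomorphic and nonvanishing on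
`D`, the winding number of the loop `γ(t) = e^{it}` around `0` equals `2 - l`.  Here
`wind_φ(γ) = AC(γ)/π` with
`AC(γ) = (1/2) Im ∫_γ (d/dz log f) dz + Im ∫₀^{2π} (z̈/ż) dt` and
`(d/dz) log f = -k z^{-k-1} - l z^{-1} + g′/g`. -/
theorem winding_around_exponential_singularity
    (k : ℕ) (hk : 1 ≤ k) (l : ℤ) (g : ℂ → ℂ)
    (hg : DifferentiableOn ℂ g (Metric.ball (0 : ℂ) 2))
    (hg0 : ∀ z ∈ Metric.ball (0 : ℂ) 2, g z ≠ 0) :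
    ((1 / 2) * (∫ t in (0:ℝ)..(2 * Real.pi),
        (-(k : ℂ) * (exp (I * (t : ℂ))) ^ (-(k : ℤ) - 1)
          - (l : ℂ) * (exp (I * (t : ℂ)))⁻¹
          + deriv g (exp (I * (t : ℂ))) / g (exp (I * (t : ℂ))))
          * (I * exp (I * (t : ℂ)))).im
      + (∫ t in (0:ℝ)..(2 * Real.pi),
        (I * (I * exp (I * (t : ℂ)))) / (I * exp (I * (t : ℂ)))).im) / Real.pi
      = 2 - (l : ℝ) := by
  have hz0 : ∀ t : ℝ, exp (I * (t : ℂ)) ≠ 0 := fun t => Complex.exp_ne_zero _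
  have hmem : ∀ t : ℝ, exp (I * (t : ℂ)) ∈ Metric.ball (0 : ℂ) 2 := by
    intro t
    simp [Metric.mem_ball, Complex.norm_exp]
  -- analyticity of g
  have hga : AnalyticOnNhd ℂ g (Metric.ball (0 : ℂ) 2) :=
    hg.analyticOnNhd Metric.isOpen_ball
  have hfd : DifferentiableOn ℂ (fun z => deriv g z / g z) (Metric.ball (0 : ℂ) 2) :=
    DifferentiableOn.div hga.deriv.differentiableOn hg hg0
  -- rewrite the first integrand pointwise
  have key : ∀ t : ℝ,
      (-(k : ℂ) * (exp (I * (t : ℂ))) ^ (-(k : ℤ) - 1)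
          - (l : ℂ) * (exp (I * (t : ℂ)))⁻¹
          + deriv g (exp (I * (t : ℂ))) / g (exp (I * (t : ℂ))))
          * (I * exp (I * (t : ℂ)))
        = (-(k : ℂ) * I) * Complex.exp ((-(k : ℂ) * I) * t) + (-(l : ℂ) * I)
          + (deriv g (exp (I * (t : ℂ))) / g (exp (I * (t : ℂ)))) * (I * exp (I * (t : ℂ))) := by
    intro t
    have h1 : (exp (I * (t : ℂ))) ^ (-(k : ℤ) - 1) * exp (I * (t : ℂ))
        = (exp (I * (t : ℂ))) ^ (-(k : ℤ)) := by
      rw [zpow_sub_one₀ (hz0 t), mul_assoc, inv_mul_cancel₀ (hz0 t), mul_one]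
    have h2 : (exp (I * (t : ℂ))) ^ (-(k : ℤ)) = Complex.exp ((-(k : ℂ) * I) * t) := by
      rw [← Complex.exp_int_mul]
      push_cast
      ring_nf
    have h3 : ((exp (I * (t : ℂ)))⁻¹ * exp (I * (t : ℂ))) = 1 :=
      inv_mul_cancel₀ (hz0 t)
    calc (-(k : ℂ) * (exp (I * (t : ℂ))) ^ (-(k : ℤ) - 1)
          - (l : ℂ) * (exp (I * (t : ℂ)))⁻¹
          + deriv g (exp (I * (t : ℂ))) / g (exp (I * (t : ℂ))))
          * (I * exp (I * (t : ℂ)))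
        = (-(k : ℂ) * I) * ((exp (I * (t : ℂ))) ^ (-(k : ℤ) - 1) * exp (I * (t : ℂ)))
          + (-(l : ℂ) * I) * ((exp (I * (t : ℂ)))⁻¹ * exp (I * (t : ℂ)))
          + (deriv g (exp (I * (t : ℂ))) / g (exp (I * (t : ℂ)))) * (I * exp (I * (t : ℂ))) := by
          ring
      _ = _ := by rw [h1, h2, h3]; ring
  -- integrability of the three pieces
  have contz : Continuous fun t : ℝ => exp (I * (t : ℂ)) := by fun_prop
  have iA : IntervalIntegrable (fun t : ℝ => (-(k : ℂ) * I) * Complex.exp ((-(k : ℂ) * I) * t))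
      MeasureTheory.volume 0 (2 * Real.pi) := by
    apply Continuous.intervalIntegrable; fun_prop
  have iB : IntervalIntegrable (fun _ : ℝ => (-(l : ℂ) * I))
      MeasureTheory.volume 0 (2 * Real.pi) := intervalIntegrable_const
  have contC : Continuous fun t : ℝ =>
      (deriv g (exp (I * (t : ℂ))) / g (exp (I * (t : ℂ)))) * (I * exp (I * (t : ℂ))) := by
    have : ContinuousOn (fun z => deriv g z / g z) (Metric.ball (0 : ℂ) 2) := hfd.continuousOn
    exact ((this.comp_continuous contz hmem).mul (by fun_prop))
  have iC : IntervalIntegrable (fun t : ℝ =>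
      (deriv g (exp (I * (t : ℂ))) / g (exp (I * (t : ℂ)))) * (I * exp (I * (t : ℂ))))
      MeasureTheory.volume 0 (2 * Real.pi) := contC.intervalIntegrable _ _
  -- value of piece A
  have hA : (∫ t in (0:ℝ)..(2 * Real.pi),
      (-(k : ℂ) * I) * Complex.exp ((-(k : ℂ) * I) * t)) = 0 := by
    have hc : (-(k : ℂ) * I) ≠ 0 := by
      simp [Complex.ext_iff]
      exact_mod_cast Nat.one_le_iff_ne_zero.mp hk
    have hev : Complex.exp (-(k : ℂ) * I * (2 * Real.pi)) = 1 := by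
      have h := Complex.exp_int_mul (2 * Real.pi * I) (-(k : ℤ))
      rw [Complex.exp_two_pi_mul_I, one_zpow] at h
      rw [← h]
      congr 1
      push_cast
      ring
    rw [intervalIntegral.integral_const_mul, integral_exp_mul_complex hc]
    push_cast
    rw [mul_zero, Complex.exp_zero, hev]
    simp
  -- value of piece B
  have hB : (∫ _ in (0:ℝ)..(2 * Real.pi), (-(l : ℂ) * I)) = -(l : ℂ) * (2 * Real.pi) * I := by
    simp [intervalIntegral.integral_const]
    ring
  -- piece C is a circle integral, hence zero
  have hC : (∫ t in (0:ℝ)..(2 * Real.pi),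
      (deriv g (exp (I * (t : ℂ))) / g (exp (I * (t : ℂ)))) * (I * exp (I * (t : ℂ)))) = 0 := by
    have heq : (∫ t in (0:ℝ)..(2 * Real.pi),
        (deriv g (exp (I * (t : ℂ))) / g (exp (I * (t : ℂ)))) * (I * exp (I * (t : ℂ))))
        = ∮ z in C(0, 1), deriv g z / g z := by
      rw [circleIntegral]
      apply intervalIntegral.integral_congr
      intro t _
      simp [circleMap, deriv_circleMap, smul_eq_mul]
      ring_nf
    rw [heq]
    apply circleIntegral_eq_zero_of_differentiable_on_off_countable (zero_le_one)
      (Set.countable_empty) (f := fun z => deriv g z / g z)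
    · exact hfd.continuousOn.mono (Metric.closedBall_subset_ball (by norm_num))
    · intro z hz
      exact hfd.differentiableAt (Metric.isOpen_ball.mem_nhds
        (Metric.ball_subset_ball (by norm_num) hz.1))
  -- the first integral
  have hfirst : (∫ t in (0:ℝ)..(2 * Real.pi),
      (-(k : ℂ) * (exp (I * (t : ℂ))) ^ (-(k : ℤ) - 1)
        - (l : ℂ) * (exp (I * (t : ℂ)))⁻¹
        + deriv g (exp (I * (t : ℂ))) / g (exp (I * (t : ℂ))))
        * (I * exp (I * (t : ℂ)))) = -(l : ℂ) * (2 * Real.pi) * I := by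
    rw [intervalIntegral.integral_congr (g := fun t : ℝ =>
      (-(k : ℂ) * I) * Complex.exp ((-(k : ℂ) * I) * t) + (-(l : ℂ) * I)
        + (deriv g (exp (I * (t : ℂ))) / g (exp (I * (t : ℂ)))) * (I * exp (I * (t : ℂ))))
      (fun t _ => key t)]
    rw [intervalIntegral.integral_add (iA.add iB) iC, intervalIntegral.integral_add iA iB,
      hA, hB, hC]
    ring
  -- the second integral
  have hsecond : (∫ t in (0:ℝ)..(2 * Real.pi),
      (I * (I * exp (I * (t : ℂ)))) / (I * exp (I * (t : ℂ)))) = (2 * Real.pi : ℝ) • I := by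
    rw [intervalIntegral.integral_congr (g := fun _ : ℝ => I)
      (fun t _ => mul_div_cancel_right₀ I (mul_ne_zero I_ne_zero (hz0 t)))]
    simp
  rw [hfirst, hsecond]
  have him1 : (-(l : ℂ) * (2 * Real.pi) * I).im = -(l : ℝ) * (2 * Real.pi) := by
    simp [Complex.mul_im]
  have him2 : ((2 * Real.pi : ℝ) • I).im = 2 * Real.pi := by simp
  rw [him1, him2]
  field_simp
  ring
end

section
/- Let φ be a quadratic differential on ℙ¹ with exponential-type singularities of indexes (k_i, l_i) at distinct points z_1,…,z_b (local form e^{v^{-k_i}} v^{-l_i} h(v) dv² with h nonvanishing), and let Ω_l = ∏_{i=1}^b (z - z_i)^{-l_i} dz² with ∑ l_i = 4. Then there exists a meromorphic function f on ℙ¹, unique up to adding 2πi m (m ∈ ℤ) to f, with poles exactly of order k_i at z_i, such that φ = e^f Ω_l. (Key step: the ratio g = φ/Ω_l is a nonvanishing holomorphic function on ℙ¹∖{z_1,…,z_b} whose logarithm is single-valued near each z_i with a pole of order k_i there.) -/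
/-!
Put `Ω = ∏ (z - zᵢ)^{-lᵢ}` and `g = φ / Ω`. Near `zᵢ` we have `g = exp (vᵢ^{-kᵢ}) · (analytic)`,
and since `vᵢ` is a local coordinate, `vᵢ^{-kᵢ}` differs by an analytic function from a principal
part `Pᵢ = Qᵢ / (z - zᵢ)^{kᵢ}` with `Qᵢ(zᵢ) ≠ 0`. Hence `g · exp (-∑ Pᵢ)` has only removable
singularities; it tends to `c = lim g ≠ 0` at infinity, so by Liouville it is the constant `c`, and
`f = log c + ∑ Pᵢ` works. Two such `f` differ by a continuous function with values in `2πiℤ` on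
the connected set `ℂ ∖ {zᵢ}`, hence by a constant.
-/

open Complex Filter Bornology Topology Set Function

def HasRemovableSingularityAt (f : ℂ → ℂ) (z₀ : ℂ) : Prop :=
  ∃ A : ℂ → ℂ, AnalyticAt ℂ A z₀ ∧ f =ᶠ[𝓝[≠] z₀] A

namespace HasRemovableSingularityAt

variable {f g : ℂ → ℂ} {z₀ : ℂ}

theorem congr (hf : HasRemovableSingularityAt f z₀) (h : f =ᶠ[𝓝[≠] z₀] g) :
    HasRemovableSingularityAt g z₀ :=
  let ⟨A, hA, hfA⟩ := hf
  ⟨A, hA, h.symm.trans hfA⟩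

theorem mul (hf : HasRemovableSingularityAt f z₀) (hg : HasRemovableSingularityAt g z₀) :
    HasRemovableSingularityAt (fun w => f w * g w) z₀ :=
  let ⟨A, hA, hfA⟩ := hf
  let ⟨B, hB, hgB⟩ := hg
  ⟨fun w => A w * B w, hA.mul hB, hfA.mul hgB⟩

theorem exp (hf : HasRemovableSingularityAt f z₀) :
    HasRemovableSingularityAt (fun w => exp (f w)) z₀ :=
  let ⟨A, hA, hfA⟩ := hf
  ⟨fun w => Complex.exp (A w), hA.cexp, hfA.fun_comp Complex.exp⟩

theorem mul_exp_neg_of_sub {V P : ℂ → ℂ}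
    (hV : HasRemovableSingularityAt (fun w => g w * Complex.exp (-V w)) z₀)
    (hVP : HasRemovableSingularityAt (fun w => V w - P w) z₀) :
    HasRemovableSingularityAt (fun w => g w * Complex.exp (-P w)) z₀ :=
  (hV.mul hVP.exp).congr <| .of_forall fun w => by
    simp only
    rw [mul_assoc, ← Complex.exp_add]
    ring_nf

end HasRemovableSingularityAt

theorem AnalyticAt.hasRemovableSingularityAt {f : ℂ → ℂ} {z₀ : ℂ} (hf : AnalyticAt ℂ f z₀) :
    HasRemovableSingularityAt f z₀ :=
  ⟨f, hf, .rfl⟩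

theorem eq_of_tendsto_cobounded_of_hasRemovableSingularityAt {s : Set ℂ} (hs : s.Finite)
    {F : ℂ → ℂ} {c : ℂ} (hF : ∀ w ∉ s, DifferentiableAt ℂ F w)
    (hrem : ∀ z ∈ s, HasRemovableSingularityAt F z) (hlim : Tendsto F (cobounded ℂ) (𝓝 c)) :
    ∀ w ∉ s, F w = c := by
  classical
  choose A hA hFA using hrem
  set e : ℂ → ℂ := fun w => if hw : w ∈ s then A w hw w else F w
  have he_out : ∀ w ∉ s, e =ᶠ[𝓝 w] F := fun w hw =>
    (hs.isClosed.isOpen_compl.eventually_mem hw).mono fun x hx => dif_neg hx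
  have he_in : ∀ z (hz : z ∈ s), e =ᶠ[𝓝 z] A z hz := by
    intro z hz
    have hfar : ∀ᶠ x in 𝓝 z, x ∉ s \ {z} :=
      (hs.sdiff.isClosed.isOpen_compl.eventually_mem fun h => h.2 rfl)
    filter_upwards [hfar, eventually_nhdsWithin_iff.mp (hFA z hz)] with x hx hxA
    rcases eq_or_ne x z with rfl | hxz
    · exact dif_pos hz
    · have hxs : x ∉ s := fun h => hx ⟨h, hxz⟩
      simp only [e, dif_neg hxs, hxA hxz]
  have he : Differentiable ℂ e := fun w => by
    by_cases hw : w ∈ s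
    · exact (hA w hw).differentiableAt.congr_of_eventuallyEq (he_in w hw)
    · exact (hF w hw).congr_of_eventuallyEq (he_out w hw)
  have he_lim : Tendsto e (cocompact ℂ) (𝓝 c) := by
    rw [← Metric.cobounded_eq_cocompact]
    refine hlim.congr' ?_
    filter_upwards [isBounded_def.mp hs.isBounded] with w hw
    exact (dif_neg hw : e w = F w).symm
  intro w hw
  rw [← (he_out w hw).eq_of_nhds]
  exact he.apply_eq_of_tendsto_cocompact w he_lim

theorem eq_sum_add_pow_mul_iterate_dslope {𝕜 : Type*} [NontriviallyNormedField 𝕜]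
    (F : 𝕜 → 𝕜) (z₀ w : 𝕜) (n : ℕ) :
    F w = ∑ m ∈ Finset.range n, (swap dslope z₀)^[m] F z₀ * (w - z₀) ^ m
      + (w - z₀) ^ n * (swap dslope z₀)^[n] F w := by
  induction n with
  | zero => simp
  | succ n ih =>
    have hstep := sub_smul_dslope ((swap dslope z₀)^[n] F) z₀ w
    rw [smul_eq_mul] at hstep
    rw [Finset.sum_range_succ, iterate_succ_apply']
    simp only [swap] at hstep ih ⊢
    linear_combination ih - (w - z₀) ^ n * hstep

theorem tendsto_sum_mul_pow_div_pow_cobounded {𝕜 : Type*} [NormedField 𝕜] (a : ℕ → 𝕜)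
    (z₀ : 𝕜) (k : ℕ) :
    Tendsto (fun w => (∑ m ∈ Finset.range k, a m * (w - z₀) ^ m) / (w - z₀) ^ k)
      (cobounded 𝕜) (𝓝 0) := by
  have hne : ∀ᶠ w in cobounded 𝕜, w - z₀ ≠ 0 :=
    (tendsto_sub_const_cobounded z₀).eventually (isBounded_def.mp isBounded_singleton)
  simp only [Finset.sum_div]
  rw [← Finset.sum_const_zero (s := Finset.range k)]
  refine tendsto_finsetSum _ fun m hm => ?_
  have hkm : k - m ≠ 0 := by grind
  have hinv : Tendsto (fun w => ((w - z₀) ^ (k - m))⁻¹) (cobounded 𝕜) (𝓝 0) :=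
    tendsto_inv₀_cobounded.comp
      ((tendsto_pow_cobounded_cobounded hkm).comp (tendsto_sub_const_cobounded z₀))
  have := hinv.const_mul (a m)
  rw [mul_zero] at this
  refine this.congr' ?_
  filter_upwards [hne] with w hw
  rw [pow_sub₀ _ hw (by grind)]
  field_simp

theorem AnalyticAt.iterate_dslope {𝕜 : Type*} [NontriviallyNormedField 𝕜] {f : 𝕜 → 𝕜}
    {z₀ : 𝕜} (hf : AnalyticAt 𝕜 f z₀) (n : ℕ) :
    AnalyticAt 𝕜 ((swap dslope z₀)^[n] f) z₀ :=
  let ⟨_, hp⟩ := hf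
  (hp.has_fpower_series_iterate_dslope_fslope n).analyticAt

theorem eq_sub_mul_dslope_of_eq_zero {𝕜 : Type*} [NontriviallyNormedField 𝕜] {f : 𝕜 → 𝕜}
    {z₀ : 𝕜} (hf₀ : f z₀ = 0) (w : 𝕜) : f w = (w - z₀) * dslope f z₀ w := by
  simpa [hf₀] using (sub_smul_dslope f z₀ w).symm

theorem exists_principalPart_zpow_neg {v : ℂ → ℂ} {z₀ : ℂ} (hv : AnalyticAt ℂ v z₀)
    (hv₀ : v z₀ = 0) (hv' : deriv v z₀ ≠ 0) {k : ℕ} (hk : k ≠ 0) :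
    ∃ Q : ℂ → ℂ, (∀ w, AnalyticAt ℂ Q w) ∧ Q z₀ ≠ 0 ∧
      Tendsto (fun w => Q w / (w - z₀) ^ k) (cobounded ℂ) (𝓝 0) ∧
      HasRemovableSingularityAt (fun w => v w ^ (-(k : ℤ)) - Q w / (w - z₀) ^ k) z₀ := by
  have hu₀ : dslope v z₀ z₀ ≠ 0 := by rwa [dslope_same]
  set F : ℂ → ℂ := fun w => (dslope v z₀ w ^ k)⁻¹
  have hF : AnalyticAt ℂ F z₀ := ((hv.iterate_dslope 1).pow k).inv (pow_ne_zero k hu₀)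
  -- `Q` is the Taylor polynomial of degree `< k` of `F = (v / (w - z₀))⁻ᵏ` at `z₀`.
  set a : ℕ → ℂ := fun m => (swap dslope z₀)^[m] F z₀
  refine ⟨fun w => ∑ m ∈ Finset.range k, a m * (w - z₀) ^ m, fun w => by fun_prop, ?_,
    tendsto_sum_mul_pow_div_pow_cobounded a z₀ k, (swap dslope z₀)^[k] F,
    hF.iterate_dslope k, ?_⟩
  · change ∑ m ∈ Finset.range k, a m * (z₀ - z₀) ^ m ≠ 0
    rw [Finset.sum_eq_single_of_mem 0 (by simpa [Nat.pos_iff_ne_zero])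
      fun m _ hm => by simp [zero_pow hm]]
    simp [a, F, hk, hv']
  · filter_upwards [self_mem_nhdsWithin] with w hw
    have hw' : w - z₀ ≠ 0 := sub_ne_zero.mpr hw
    have hF_w := eq_sum_add_pow_mul_iterate_dslope F z₀ w k
    rw [eq_sub_mul_dslope_of_eq_zero hv₀ w, zpow_neg, zpow_natCast, mul_pow, mul_inv]
    change _ * F w - _ = _
    rw [hF_w]
    field_simp
    ring

theorem hasRemovableSingularityAt_div_mul_exp_neg {φ v h Ω : ℂ → ℂ} {U : Set ℂ} {z₀ : ℂ}
    {k l : ℤ} (hv : AnalyticAt ℂ v z₀) (hv₀ : v z₀ = 0) (hv' : deriv v z₀ ≠ 0)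
    (hh : AnalyticAt ℂ h z₀) (hΩ : AnalyticAt ℂ Ω z₀) (hΩ₀ : Ω z₀ ≠ 0) (hU : U ∈ 𝓝 z₀)
    (hφ : ∀ w ∈ U, w ≠ z₀ → φ w = exp (v w ^ k) * v w ^ (-l) * h w * deriv v w ^ 2) :
    HasRemovableSingularityAt (fun w => φ w / ((w - z₀) ^ (-l) * Ω w) * exp (-(v w ^ k))) z₀ := by
  refine ⟨fun w => dslope v z₀ w ^ (-l) * h w * deriv v w ^ 2 / Ω w, ?_, ?_⟩
  · have hu₀ : dslope v z₀ z₀ ≠ 0 := by rwa [dslope_same]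
    exact ((((hv.iterate_dslope 1).zpow hu₀).mul hh).mul (hv.deriv.pow 2)).div hΩ hΩ₀
  · filter_upwards [nhdsWithin_le_nhds hU, self_mem_nhdsWithin] with w hwU hw
    have hw' : (w - z₀) ^ (-l) ≠ 0 := zpow_ne_zero _ (sub_ne_zero.mpr hw)
    rw [hφ w hwU hw, eq_sub_mul_dslope_of_eq_zero hv₀ w, exp_neg]
    field_simp
    rw [mul_zpow]
    ring

theorem analyticAt_div_sub_pow {Q : ℂ → ℂ} {z₀ w : ℂ} (hQ : AnalyticAt ℂ Q w) (hw : w ≠ z₀)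
    (n : ℕ) : AnalyticAt ℂ (fun x => Q x / (x - z₀) ^ n) w :=
  hQ.div (by fun_prop) (pow_ne_zero n (sub_ne_zero.mpr hw))

theorem analyticAt_prod_sub_zpow {ι : Type*} (s : Finset ι) (z : ι → ℂ) (n : ι → ℤ) {w : ℂ}
    (hw : ∀ i ∈ s, w ≠ z i) : AnalyticAt ℂ (fun x => ∏ i ∈ s, (x - z i) ^ n i) w :=
  Finset.analyticAt_fun_prod _ fun i hi =>
    (analyticAt_id.sub analyticAt_const).zpow (sub_ne_zero.mpr (hw i hi))

theorem prod_sub_zpow_ne_zero {ι : Type*} (s : Finset ι) (z : ι → ℂ) (n : ι → ℤ) {w : ℂ}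
    (hw : ∀ i ∈ s, w ≠ z i) : ∏ i ∈ s, (w - z i) ^ n i ≠ 0 :=
  Finset.prod_ne_zero_iff.mpr fun i hi => zpow_ne_zero _ (sub_ne_zero.mpr (hw i hi))

theorem hasRemovableSingularityAt_div_prod_mul_exp_neg {ι : Type*} [Fintype ι] {z : ι → ℂ}
    (hz : Injective z) (l : ι → ℤ) {φ v h : ℂ → ℂ} {U : Set ℂ} {i : ι} {k : ℤ}
    (hv : AnalyticAt ℂ v (z i)) (hv₀ : v (z i) = 0) (hv' : deriv v (z i) ≠ 0)
    (hh : AnalyticAt ℂ h (z i)) (hU : U ∈ 𝓝 (z i))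
    (hφ : ∀ w ∈ U, w ≠ z i → φ w = exp (v w ^ k) * v w ^ (-l i) * h w * deriv v w ^ 2) :
    HasRemovableSingularityAt
      (fun w => φ w / (∏ j, (w - z j) ^ (-l j)) * exp (-(v w ^ k))) (z i) := by
  classical
  have hne : ∀ j ∈ Finset.univ.erase i, z i ≠ z j := fun j hj =>
    hz.ne (Finset.ne_of_mem_erase hj).symm
  refine (hasRemovableSingularityAt_div_mul_exp_neg hv hv₀ hv' hh
    (analyticAt_prod_sub_zpow _ z (-l ·) hne) (prod_sub_zpow_ne_zero _ z _ hne) hU hφ).congr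
    (.of_forall fun w => ?_)
  simp only [Finset.mul_prod_erase _ (fun j => (w - z j) ^ (-l j)) (Finset.mem_univ i)]

theorem eq_mul_exp_sum_of_tendsto_cobounded {ι : Type*} [Fintype ι] {z : ι → ℂ}
    (hz : Injective z) {g : ℂ → ℂ} {P : ι → ℂ → ℂ} {c : ℂ}
    (hg : ∀ w, (∀ i, w ≠ z i) → DifferentiableAt ℂ g w)
    (hP : ∀ i w, w ≠ z i → AnalyticAt ℂ (P i) w)
    (hrem : ∀ i, HasRemovableSingularityAt (fun w => g w * exp (-P i w)) (z i))
    (hgc : Tendsto g (cobounded ℂ) (𝓝 c)) (hP₀ : ∀ i, Tendsto (P i) (cobounded ℂ) (𝓝 0)) :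
    ∀ w, (∀ i, w ≠ z i) → g w = c * exp (∑ i, P i w) := by
  classical
  have hF := eq_of_tendsto_cobounded_of_hasRemovableSingularityAt (finite_range z)
    (F := fun w => g w * exp (-∑ i, P i w)) (c := c) ?_ ?_ ?_
  · intro w hw
    have := hF w (by simpa [eq_comm] using hw)
    rw [← this, mul_assoc, ← Complex.exp_add, neg_add_cancel, Complex.exp_zero, mul_one]
  · intro w hw
    simp only [mem_range, not_exists] at hw
    exact (hg w fun i h => hw i h.symm).mul
      (Finset.analyticAt_fun_sum _ fun i _ => hP i w fun h => hw i h.symm).neg.cexp.differentiableAt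
  · rintro _ ⟨i, rfl⟩
    have hrest : AnalyticAt ℂ (fun w => exp (-∑ j ∈ Finset.univ.erase i, P j w)) (z i) :=
      (Finset.analyticAt_fun_sum _ fun j hj =>
        hP j (z i) (hz.ne (Finset.ne_of_mem_erase hj).symm)).neg.cexp
    refine ((hrem i).mul hrest.hasRemovableSingularityAt).congr (.of_forall fun w => ?_)
    simp only
    rw [← Finset.add_sum_erase _ _ (Finset.mem_univ i), neg_add, Complex.exp_add]
    ring
  · have hsum : Tendsto (fun w => ∑ i, P i w) (cobounded ℂ) (𝓝 0) := by
      simpa using tendsto_finsetSum Finset.univ fun i _ => hP₀ i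
    simpa using hgc.mul ((Complex.continuous_exp.tendsto 0).comp (by simpa using hsum.neg))

theorem exists_analyticOnNhd_div_pow_eq_add_sum {ι : Type*} [Fintype ι] {z : ι → ℂ}
    (hz : Injective z) {Q : ι → ℂ → ℂ} (hQ : ∀ j w, AnalyticAt ℂ (Q j) w) (k : ι → ℕ) (c : ℂ)
    {i : ι} (hQ₀ : Q i (z i) ≠ 0) (hk : k i ≠ 0) :
    ∃ (U : Set ℂ) (u : ℂ → ℂ), IsOpen U ∧ z i ∈ U ∧ AnalyticOnNhd ℂ u U ∧ u (z i) ≠ 0 ∧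
      ∀ w ∈ U, w ≠ z i → c + ∑ j, Q j w / (w - z j) ^ k j = u w / (w - z i) ^ k i := by
  classical
  refine ⟨(z '' {i}ᶜ)ᶜ, fun w => (w - z i) ^ k i *
      (c + ∑ j ∈ Finset.univ.erase i, Q j w / (w - z j) ^ k j) + Q i w,
    ((toFinite _).image z).isClosed.isOpen_compl, fun ⟨j, hj, hji⟩ => hj (hz hji),
    fun w hw => ?_, by simpa [hk] using hQ₀, fun w _ hw => ?_⟩
  · have hne : ∀ j ∈ Finset.univ.erase i, w ≠ z j := fun j hj hwj =>
      hw ⟨j, Finset.ne_of_mem_erase hj, hwj.symm⟩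
    exact ((by fun_prop : AnalyticAt ℂ (fun x => (x - z i) ^ k i) w).mul (analyticAt_const.add
      (Finset.analyticAt_fun_sum _ fun j hj => analyticAt_div_sub_pow (hQ j w) (hne j hj) _))).add
      (hQ i w)
  · rw [← Finset.add_sum_erase _ _ (Finset.mem_univ i)]
    have : (w - z i) ^ k i ≠ 0 := pow_ne_zero _ (sub_ne_zero.mpr hw)
    field_simp
    ring

theorem exists_int_eq_add_of_exp_eq {S : Set ℂ} (hS : IsPreconnected S) {f f' : ℂ → ℂ}
    (hf : ContinuousOn f S) (hf' : ContinuousOn f' S) (h : ∀ w ∈ S, exp (f' w) = exp (f w)) :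
    ∃ m : ℤ, ∀ w ∈ S, f' w = f w + 2 * Real.pi * I * m := by
  have hmaps : MapsTo (f' - f) S (AddSubgroup.zmultiples (2 * Real.pi * I)) := fun w hw => by
    obtain ⟨m, hm⟩ := exp_eq_exp_iff_exists_int.mp (h w hw)
    exact AddSubgroup.mem_zmultiples_iff.mpr ⟨m, by simp [hm]⟩
  obtain ⟨y, hy, hfy⟩ := hS.eqOn_const_of_mapsTo
    (isDiscrete_iff_discreteTopology.mpr (NormedSpace.discreteTopology_zmultiples _))
    (hf'.sub hf) hmaps ⟨0, zero_mem _⟩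
  obtain ⟨m, rfl⟩ := AddSubgroup.mem_zmultiples_iff.mp hy
  refine ⟨m, fun w hw => ?_⟩
  have := hfy hw
  simp only [Pi.sub_apply, const_apply, zsmul_eq_mul] at this
  linear_combination this

theorem isPreconnected_setOf_forall_ne {ι : Type*} [Finite ι] (z : ι → ℂ) :
    IsPreconnected {w | ∀ i, w ≠ z i} := by
  have : {w | ∀ i, w ≠ z i} = (range z)ᶜ := by
    ext w
    simp [eq_comm]
  rw [this]
  exact ((finite_range z).countable.isConnected_compl_of_one_lt_rank (by simp)).isPreconnected

theorem exponential_type_differential_is_exp_Hurwitz_general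
    (b : ℕ) (z : Fin b → ℂ) (hz : Function.Injective z)
    (k : Fin b → ℕ) (hk : ∀ i, 1 ≤ k i) (l : Fin b → ℤ)
    (φ : ℂ → ℂ)
    (hφ : AnalyticOnNhd ℂ φ {w | ∀ i, w ≠ z i})
    (hloc : ∀ i, ∃ (U : Set ℂ) (v h : ℂ → ℂ), IsOpen U ∧ z i ∈ U ∧
      AnalyticOnNhd ℂ v U ∧ AnalyticOnNhd ℂ h U ∧
      v (z i) = 0 ∧ deriv v (z i) ≠ 0 ∧ (∀ w ∈ U, h w ≠ 0) ∧
      ∀ w ∈ U, w ≠ z i →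
        φ w = exp ((v w) ^ (-(k i : ℤ))) * (v w) ^ (-(l i)) * h w * (deriv v w) ^ 2)
    (hinf : ∃ c ≠ (0 : ℂ), Filter.Tendsto
      (fun w => φ w / ∏ i, (w - z i) ^ (-(l i)))
      (Bornology.cobounded ℂ) (nhds c)) :
    ∃ f : ℂ → ℂ,
      AnalyticOnNhd ℂ f {w | ∀ i, w ≠ z i} ∧
      (∀ i, ∃ (U : Set ℂ) (u : ℂ → ℂ), IsOpen U ∧ z i ∈ U ∧
        AnalyticOnNhd ℂ u U ∧ u (z i) ≠ 0 ∧
        ∀ w ∈ U, w ≠ z i → f w = u w / (w - z i) ^ (k i)) ∧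
      (∃ c : ℂ, Filter.Tendsto f (Bornology.cobounded ℂ) (nhds c)) ∧
      (∀ w, (∀ i, w ≠ z i) → φ w = exp (f w) * ∏ i, (w - z i) ^ (-(l i))) ∧
      (∀ f' : ℂ → ℂ, AnalyticOnNhd ℂ f' {w | ∀ i, w ≠ z i} →
        (∀ w, (∀ i, w ≠ z i) → φ w = exp (f' w) * ∏ i, (w - z i) ^ (-(l i))) →
        ∃ m : ℤ, ∀ w, (∀ i, w ≠ z i) →
          f' w = f w + 2 * Real.pi * I * (m : ℂ)) := by
  obtain ⟨c, hc₀, hc⟩ := hinf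
  choose U v h hU hzU hv hh hv₀ hv' _ hφv using hloc
  have hk₀ : ∀ i, k i ≠ 0 := fun i => Nat.one_le_iff_ne_zero.mp (hk i)
  choose Q hQ hQ₀ hQlim hQrem using fun i =>
    exists_principalPart_zpow_neg (hv i _ (hzU i)) (hv₀ i) (hv' i) (hk₀ i)
  have hΩ₀ : ∀ w, (∀ i, w ≠ z i) → ∏ i, (w - z i) ^ (-l i) ≠ 0 := fun w hw =>
    prod_sub_zpow_ne_zero _ z _ fun i _ => hw i
  set f : ℂ → ℂ := fun w => Complex.log c + ∑ i, Q i w / (w - z i) ^ k i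
  have hf : AnalyticOnNhd ℂ f {w | ∀ i, w ≠ z i} := fun w hw =>
    analyticAt_const.add (Finset.analyticAt_fun_sum _ fun i _ =>
      analyticAt_div_sub_pow (hQ i w) (hw i) _)
  have hφf : ∀ w, (∀ i, w ≠ z i) → φ w = exp (f w) * ∏ i, (w - z i) ^ (-(l i)) := by
    intro w hw
    have hg := eq_mul_exp_sum_of_tendsto_cobounded hz
      (g := fun w => φ w / ∏ i, (w - z i) ^ (-l i))
      (fun w hw => ((hφ w hw).div (analyticAt_prod_sub_zpow _ z _ fun i _ => hw i)
        (hΩ₀ w hw)).differentiableAt)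
      (fun i w hw => analyticAt_div_sub_pow (hQ i w) hw _)
      (fun i => (hasRemovableSingularityAt_div_prod_mul_exp_neg hz l (hv i _ (hzU i)) (hv₀ i)
        (hv' i) (hh i _ (hzU i)) ((hU i).mem_nhds (hzU i)) (hφv i)).mul_exp_neg_of_sub (hQrem i))
      hc hQlim w hw
    rw [Complex.exp_add, Complex.exp_log hc₀, ← hg, div_mul_cancel₀ _ (hΩ₀ w hw)]
  refine ⟨f, hf, fun i => exists_analyticOnNhd_div_pow_eq_add_sum hz hQ k _ (hQ₀ i) (hk₀ i),
    ⟨Complex.log c, by simpa using tendsto_const_nhds.add (tendsto_finsetSum _ fun i _ => hQlim i)⟩,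
    hφf, fun f' hf' hφf' => ?_⟩
  exact exists_int_eq_add_of_exp_eq (isPreconnected_setOf_forall_ne z) hf.continuousOn
    hf'.continuousOn fun w hw => mul_right_cancel₀ (hΩ₀ w hw) ((hφf' w hw).symm.trans (hφf w hw))

/-- Let `φ` be a quadratic differential on `ℙ¹` with exponential-type
singularities of indexes `(kᵢ, lᵢ)` at distinct points `z₁,…,z_b` (local form
`e^{v^{-kᵢ}} v^{-lᵢ} h(v) dv²` with `h` nonvanishing, in a local coordinate `v`), and
let `Ω_l = ∏ᵢ (z - zᵢ)^{-lᵢ} dz²` with `∑ lᵢ = 4` (so that `Ω_l` extends over `∞`,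
the condition at `∞` being that `φ/Ω_l` tends to a nonzero limit).  Then there is a
meromorphic function `f` on `ℙ¹`, unique up to adding `2πi m` (`m ∈ ℤ`), whose poles
are exactly of order `kᵢ` at `zᵢ`, such that `φ = e^f Ω_l`. -/
theorem exponential_type_differential_is_exp_Hurwitz
    (b : ℕ) (hb : 1 ≤ b) (z : Fin b → ℂ) (hz : Function.Injective z)
    (k : Fin b → ℕ) (hk : ∀ i, 1 ≤ k i) (l : Fin b → ℤ) (hl : ∑ i, l i = 4)
    (φ : ℂ → ℂ)
    (hφ : AnalyticOnNhd ℂ φ {w | ∀ i, w ≠ z i})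
    (hφ0 : ∀ w, (∀ i, w ≠ z i) → φ w ≠ 0)
    (hloc : ∀ i, ∃ (U : Set ℂ) (v h : ℂ → ℂ), IsOpen U ∧ z i ∈ U ∧
      AnalyticOnNhd ℂ v U ∧ AnalyticOnNhd ℂ h U ∧
      v (z i) = 0 ∧ deriv v (z i) ≠ 0 ∧ (∀ w ∈ U, h w ≠ 0) ∧
      ∀ w ∈ U, w ≠ z i →
        φ w = exp ((v w) ^ (-(k i : ℤ))) * (v w) ^ (-(l i)) * h w * (deriv v w) ^ 2)
    (hinf : ∃ c ≠ (0 : ℂ), Filter.Tendsto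
      (fun w => φ w / ∏ i, (w - z i) ^ (-(l i)))
      (Bornology.cobounded ℂ) (nhds c)) :
    ∃ f : ℂ → ℂ,
      AnalyticOnNhd ℂ f {w | ∀ i, w ≠ z i} ∧
      (∀ i, ∃ (U : Set ℂ) (u : ℂ → ℂ), IsOpen U ∧ z i ∈ U ∧
        AnalyticOnNhd ℂ u U ∧ u (z i) ≠ 0 ∧
        ∀ w ∈ U, w ≠ z i → f w = u w / (w - z i) ^ (k i)) ∧
      (∃ c : ℂ, Filter.Tendsto f (Bornology.cobounded ℂ) (nhds c)) ∧
      (∀ w, (∀ i, w ≠ z i) → φ w = exp (f w) * ∏ i, (w - z i) ^ (-(l i))) ∧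
      (∀ f' : ℂ → ℂ, AnalyticOnNhd ℂ f' {w | ∀ i, w ≠ z i} →
        (∀ w, (∀ i, w ≠ z i) → φ w = exp (f' w) * ∏ i, (w - z i) ^ (-(l i))) →
        ∃ m : ℤ, ∀ w, (∀ i, w ≠ z i) →
          f' w = f w + 2 * Real.pi * I * (m : ℂ)) :=
  exponential_type_differential_is_exp_Hurwitz_general b z hz k hk l φ hφ hloc hinf
end
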